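/- For every integer d ≥ 0, ((q;q)_d/(μ;q)_d) · ∑_{k=1}^{d} (1/(1-q^k)) · (μ;q)_{d-k}/(q;q)_{d-k} = ∑_{k=0}^{d-1} 1/(1 - μ q^k). -/

import Mathlib

noncomputable def qPoch (z q : ℝ) (m : ℕ) : ℝ := ∏ j ∈ Finset.range m, (1 - z * q ^ j)

/-!
Write `A m = (μ;q)_m / (q;q)_m` and `S d = ∑_{m<d} A m / (1 - q^(d-m))`, the left-hand sum
reindexed by `m = d - k`. Since `A (m+1) = A m · (1 - μ q^m) / (1 - q^(m+1))`, each term of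
`S (d+1)` splits as `(1 - μ q^d) / (1 - q^(d+1))` times the corresponding term of `S d` plus
`(A (m+1) - A m) / (1 - q^(d+1))`; the second parts telescope, giving
`S (d+1) = A (d+1) / A d · S d + A d / (1 - q^(d+1))`. Hence `S d / A d` grows by
`1 / (1 - μ q^d)` at each step, i.e. `S d = A d · ∑_{k<d} 1 / (1 - μ q^k)`.
-/

open Finset

noncomputable def qPochRatio (μ q : ℝ) (m : ℕ) : ℝ := qPoch μ q m / qPoch q q m

noncomputable def qConv (μ q : ℝ) (d : ℕ) : ℝ :=
  ∑ m ∈ range d, qPochRatio μ q m / (1 - q ^ (d - m))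

section

variable {z μ q : ℝ}

lemma one_sub_pow_ne_zero (hq : ∀ n ≠ 0, q ^ n ≠ 1) {n : ℕ} (hn : n ≠ 0) : 1 - q ^ n ≠ 0 :=
  sub_ne_zero.mpr (hq n hn).symm

lemma qPoch_succ (m : ℕ) : qPoch z q (m + 1) = qPoch z q m * (1 - z * q ^ m) :=
  prod_range_succ _ _

lemma qPoch_ne_zero {m : ℕ} (h : ∀ j < m, 1 - z * q ^ j ≠ 0) : qPoch z q m ≠ 0 :=
  prod_ne_zero_iff.mpr fun j hj => h j (mem_range.mp hj)

lemma qPoch_self_ne_zero (hq : ∀ n ≠ 0, q ^ n ≠ 1) (m : ℕ) : qPoch q q m ≠ 0 :=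
  qPoch_ne_zero fun j _ => by
    rw [← pow_succ']
    exact one_sub_pow_ne_zero hq j.succ_ne_zero

lemma qPochRatio_zero : qPochRatio μ q 0 = 1 := by simp [qPochRatio, qPoch]

lemma qPochRatio_succ (m : ℕ) :
    qPochRatio μ q (m + 1) = qPochRatio μ q m * ((1 - μ * q ^ m) / (1 - q ^ (m + 1))) := by
  rw [qPochRatio, qPoch_succ, qPoch_succ, mul_div_mul_comm, pow_succ' q m]
  rfl

lemma qPochRatio_ne_zero (hq : ∀ n ≠ 0, q ^ n ≠ 1) {m : ℕ} (hμ : ∀ j < m, 1 - μ * q ^ j ≠ 0) :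
    qPochRatio μ q m ≠ 0 :=
  div_ne_zero (qPoch_ne_zero hμ) (qPoch_self_ne_zero hq m)

lemma sum_Icc_one_sub_eq_qConv (d : ℕ) :
    ∑ k ∈ Icc 1 d, 1 / (1 - q ^ k) * (qPoch μ q (d - k) / qPoch q q (d - k)) = qConv μ q d := by
  refine sum_nbij' (fun k => d - k) (fun m => d - m) ?_ ?_ ?_ ?_ ?_ <;> intro k hk <;>
    simp only [mem_Icc, mem_range] at hk ⊢
  iterate 4 omega
  rw [Nat.sub_sub_self hk.2, qPochRatio, one_div_mul_eq_div]

lemma qPochRatio_succ_div_one_sub_pow (hq : ∀ n ≠ 0, q ^ n ≠ 1) {d j : ℕ} (hj : j < d) :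
    qPochRatio μ q (j + 1) / (1 - q ^ (d - j))
      = (1 - μ * q ^ d) / (1 - q ^ (d + 1)) * (qPochRatio μ q j / (1 - q ^ (d - j)))
        + (qPochRatio μ q (j + 1) - qPochRatio μ q j) / (1 - q ^ (d + 1)) := by
  obtain ⟨k, rfl⟩ := Nat.exists_eq_add_of_lt hj
  have h1 := one_sub_pow_ne_zero hq (n := k + 1) (by omega)
  have h2 := one_sub_pow_ne_zero hq (n := j + 1) (by omega)
  have h3 := one_sub_pow_ne_zero hq (n := j + k + 1 + 1) (by omega)
  rw [qPochRatio_succ, show j + k + 1 - j = k + 1 by omega]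
  field_simp
  ring

lemma qConv_succ (hq : ∀ n ≠ 0, q ^ n ≠ 1) (d : ℕ) :
    qConv μ q (d + 1)
      = (1 - μ * q ^ d) / (1 - q ^ (d + 1)) * qConv μ q d
        + qPochRatio μ q d / (1 - q ^ (d + 1)) := by
  have hsplit : ∀ j ∈ range d, qPochRatio μ q (j + 1) / (1 - q ^ (d + 1 - (j + 1)))
      = (1 - μ * q ^ d) / (1 - q ^ (d + 1)) * (qPochRatio μ q j / (1 - q ^ (d - j)))
        + (qPochRatio μ q (j + 1) - qPochRatio μ q j) / (1 - q ^ (d + 1)) := fun j hj => by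
    rw [Nat.add_sub_add_right]
    exact qPochRatio_succ_div_one_sub_pow hq (mem_range.mp hj)
  rw [qConv, sum_range_succ', sum_congr rfl hsplit, sum_add_distrib, ← mul_sum, ← sum_div,
    sum_range_sub, qPochRatio_zero, qConv, Nat.sub_zero]
  ring

lemma qConv_eq_qPochRatio_mul_sum (hq : ∀ n ≠ 0, q ^ n ≠ 1) {d : ℕ}
    (hμ : ∀ k < d, 1 - μ * q ^ k ≠ 0) :
    qConv μ q d = qPochRatio μ q d * ∑ k ∈ range d, 1 / (1 - μ * q ^ k) := by
  induction d with
  | zero => simp [qConv]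
  | succ d ih =>
    have hμd : 1 - μ * q ^ d ≠ 0 := hμ d d.lt_succ_self
    have hd := one_sub_pow_ne_zero hq d.succ_ne_zero
    rw [qConv_succ hq, ih fun k hk => hμ k (hk.trans d.lt_succ_self), qPochRatio_succ,
      sum_range_succ]
    field_simp

end

theorem q_digamma_identity (q μ : ℝ) (d : ℕ) (hq0 : 0 < q) (hq1 : q < 1)
    (hμ : ∀ k < d, 1 - μ * q ^ k ≠ 0) :
    (qPoch q q d / qPoch μ q d) *
        ∑ k ∈ Finset.Icc 1 d, (1 / (1 - q ^ k)) * (qPoch μ q (d - k) / qPoch q q (d - k))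
      = ∑ k ∈ Finset.range d, 1 / (1 - μ * q ^ k) := by
  have hq : ∀ n ≠ 0, q ^ n ≠ 1 := fun n hn => (pow_lt_one₀ hq0.le hq1 hn).ne
  rw [sum_Icc_one_sub_eq_qConv, qConv_eq_qPochRatio_mul_sum hq hμ, ← inv_div, ← qPochRatio,
    inv_mul_cancel_left₀ (qPochRatio_ne_zero hq hμ)]
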